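/- Let A = {a,b,c}, m ≥ 4, and x₁, x₂ ≥ 1 with x₁ + x₂ = m - 3. If (x₂ + 1) is not divisible by (x₁ + 1), then the set {a⋄^{m-2}a, b⋄^{m-2}b, c⋄^{m-2}c, a⋄^{m-2}b, b⋄^{m-2}c, a⋄^{x₁}c⋄^{x₂}c} is avoidable over A. -/
import Mathlib


/-- The three-letter alphabet. -/
inductive ABC | a | b | c
deriving DecidableEq
open ABC

/-- A partial word of length `m` over alphabet `A`. -/
abbrev PW (m : ℕ) (A : Type) := Fin m → Option A

/-- A two-sided infinite word `w` meets a partial word `u`. -/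
def Meets {m : ℕ} {A : Type} (w : ℤ → A) (u : PW m A) : Prop :=
  ∃ i : ℤ, ∀ j : Fin m, ∀ x : A, u j = some x → w (i + (j : ℕ)) = x

/-- A set of partial words is unavoidable over `A`. -/
def Unavoidable {m : ℕ} {A : Type} (X : Set (PW m A)) : Prop :=
  ∀ w : ℤ → A, ∃ u ∈ X, Meets w u

/-- A set of partial words is avoidable over `A`. -/
def Avoidable {m : ℕ} {A : Type} (X : Set (PW m A)) : Prop :=
  ∃ w : ℤ → A, ∀ u ∈ X, ¬ Meets w u

/-- The partial word `x ⋄^(m-2) y` of length `m`: first letter `x`, last letter `y`,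
holes in between. -/
def oneHole {A : Type} (m : ℕ) (x y : A) : PW m A :=
  fun j => if (j : ℕ) = 0 then some x else if (j : ℕ) = m - 1 then some y else none

/-- The partial word `x ⋄^(p-1) d ⋄^(m-p-2) y` of length `m`: first letter `x`,
letter `d` at position `p`, last letter `y`, holes elsewhere. -/
def twoDef {A : Type} (m : ℕ) (x d y : A) (p : ℕ) : PW m A :=
  fun j => if (j : ℕ) = 0 then some x else if (j : ℕ) = p then some d
    else if (j : ℕ) = m - 1 then some y else none

/-- The two-sided infinite word of period `P` repeating the block `f` (given on `[0, P)`). -/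
def periodic {A : Type} (P : ℕ) (f : ℕ → A) : ℤ → A :=
  fun i => f ((i % (P : ℤ)).toNat)

def Allowed (x y : ABC) : Prop :=
  (x = a ∧ y = c) ∨ (x = c ∧ y = a) ∨ (x = c ∧ y = b) ∨ (x = b ∧ y = a)

def pat (L j : ℕ) : ABC :=
  if j % 2 = 1 then c else if j + 1 = L then b else a

lemma pat_step (L : ℕ) (hL : 2 ≤ L) (j : ℕ) (hj : j < L) :
    Allowed (pat L j) (pat L ((j + 1) % L)) := by
  rcases Nat.lt_or_ge (j + 1) L with h | h
  · rw [Nat.mod_eq_of_lt h]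
    rcases Nat.mod_two_eq_zero_or_one j with h2 | h2
    · have h3 : (j + 1) % 2 = 1 := by omega
      have h4 : j % 2 ≠ 1 := by omega
      have h5 : j + 1 ≠ L := by omega
      simp [pat, Allowed, h3, h4, h5]
    · have h3 : (j + 1) % 2 ≠ 1 := by omega
      by_cases h6 : (j + 1) + 1 = L
      · simp [pat, Allowed, h2, h3, h6]
      · simp [pat, Allowed, h2, h3, h6]
  · have hjL : j + 1 = L := by omega
    rw [hjL, Nat.mod_self]
    rcases Nat.mod_two_eq_zero_or_one j with h2 | h2
    · have h4 : j % 2 ≠ 1 := by omega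
      simp [pat, Allowed, h4, hjL, show (0:ℕ) + 1 ≠ L by omega]
    · simp [pat, Allowed, h2, show (0:ℕ) + 1 ≠ L by omega]

lemma keydiv (g L X : ℕ) (hg : 0 < g) (hL : 2 ≤ L) (hX : X < g * L) :
    ((X + g) % (g * L)) / g = (X / g + 1) % L := by
  have hexp : g * L = g * (L - 1) + g := by
    have : L - 1 + 1 = L := by omega
    calc g * L = g * (L - 1 + 1) := by rw [this]
    _ = g * (L - 1) + g := by ring
  rcases Nat.lt_or_ge (X + g) (g * L) with h | h
  · rw [Nat.mod_eq_of_lt h]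
    have h1 : X / g < L - 1 := by
      rw [Nat.div_lt_iff_lt_mul hg, mul_comm]
      omega
    rw [Nat.add_div_right X hg, Nat.mod_eq_of_lt (by omega)]
  · have hgle : g ≤ g * L := Nat.le_mul_of_pos_right g (by omega)
    have hmod : (X + g) % (g * L) = X + g - g * L := by
      rw [Nat.mod_eq_sub_mod h, Nat.mod_eq_of_lt (by omega)]
    have hdiv0 : (X + g - g * L) / g = 0 := Nat.div_eq_of_lt (by omega)
    have hXdiv : X / g = L - 1 := by
      have ha : X / g < L := by rw [Nat.div_lt_iff_lt_mul hg, mul_comm]; exact hX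
      have hb : L - 1 ≤ X / g := by
        rw [Nat.le_div_iff_mul_le hg, mul_comm]
        omega
      omega
    rw [hmod, hdiv0, hXdiv, Nat.sub_add_cancel (by omega), Nat.mod_self]

lemma main_aux (p q n : ℕ) (hp : 2 ≤ p) (hq : 1 ≤ q) (hn : n = p + q) (hnd : ¬ p ∣ q) :
    ∃ w : ℤ → ABC, (∀ i : ℤ, w (i + (p : ℕ)) = w i) ∧
      (∀ i : ℤ, Allowed (w i) (w (i + (n : ℕ)))) := by
  set g := Nat.gcd p q with hgdef
  have hgq : g ∣ q := Nat.gcd_dvd_right p q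
  have hg : 0 < g := Nat.gcd_pos_of_pos_left q (by omega)
  obtain ⟨L, hpL⟩ := Nat.gcd_dvd_left p q
  have hL : 2 ≤ L := by
    rcases Nat.lt_or_ge L 2 with h | h
    · interval_cases L
      · omega
      · exfalso; apply hnd; rw [hpL, mul_one]; exact hgq
    · exact h
  set e : ℤ := Nat.gcdB p q with hedef
  have hbez : (g : ℤ) = p * Nat.gcdA p q + q * e := Nat.gcd_eq_gcd_ab p q
  have hp0 : (0 : ℤ) < (p : ℤ) := by exact_mod_cast (by omega : 0 < p)
  set K : ℤ → ℕ := fun i => ((i * e) % (p : ℤ)).toNat / g with hK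
  have hXlt : ∀ i : ℤ, ((i * e) % (p : ℤ)).toNat < p := by
    intro i
    have h1 : 0 ≤ (i * e) % (p : ℤ) := Int.emod_nonneg _ (by omega)
    have h2 : (i * e) % (p : ℤ) < p := Int.emod_lt_of_pos _ hp0
    omega
  have hKlt : ∀ i, K i < L := by
    intro i
    show ((i * e) % (p : ℤ)).toNat / g < L
    rw [Nat.div_lt_iff_lt_mul hg]
    have h1 := hXlt i
    have h2 : p = L * g := by rw [hpL]; ring
    omega
  have hKper : ∀ i : ℤ, K (i + p) = K i := by
    intro i
    show ((i + p) * e % (p : ℤ)).toNat / g = (i * e % (p : ℤ)).toNat / g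
    have h1 : (i + p) * e = i * e + (p : ℤ) * e := by ring
    rw [h1, Int.add_mul_emod_self_left]
  have hKstep : ∀ i : ℤ, K (i + n) = (K i + 1) % L := by
    intro i
    have hncast : ((n : ℕ) : ℤ) = (p : ℤ) + (q : ℤ) := by exact_mod_cast congrArg (Nat.cast (R := ℤ)) hn
    have hd : (p : ℤ) * (i * e / p) + (i * e) % p = i * e := Int.mul_ediv_add_emod (i * e) (p : ℤ)
    have e1 : (i + (n : ℕ)) * e = ((i * e) % p + g) + (p : ℤ) * (i * e / p + e - Nat.gcdA p q) := by
      linear_combination (-1 : ℤ) * hd - hbez + e * hncast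
    have h2 : (i * e) % (p : ℤ) = ((((i * e) % (p : ℤ)).toNat : ℕ) : ℤ) :=
      (Int.toNat_of_nonneg (Int.emod_nonneg _ (by omega))).symm
    set X := ((i * e) % (p : ℤ)).toNat with hXdef
    have h3 : (i + (n : ℕ)) * e % (p : ℤ) = (((X + g) % p : ℕ) : ℤ) := by
      rw [e1, Int.add_mul_emod_self_left]
      rw [show (i * e) % (p : ℤ) + g = (((X + g : ℕ)) : ℤ) by push_cast [← h2]; ring]
      push_cast
      ring
    show ((i + (n : ℕ)) * e % (p : ℤ)).toNat / g = (X / g + 1) % L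
    rw [h3, Int.toNat_natCast, hpL]
    exact keydiv g L X hg hL (by rw [← hpL]; exact hXlt i)
  refine ⟨fun i => pat L (K i), fun i => congrArg (pat L) (hKper i), fun i => ?_⟩
  have : pat L (K (i + (n : ℕ))) = pat L ((K i + 1) % L) := congrArg (pat L) (hKstep i)
  rw [show (fun i => pat L (K i)) (i + (n : ℕ)) = pat L ((K i + 1) % L) from this]
  exact pat_step L hL (K i) (hKlt i)

lemma no_one (m : ℕ) (hm : 2 ≤ m) (w : ℤ → ABC) (x y : ABC)
    (h : ∀ i : ℤ, ¬ (w i = x ∧ w (i + ((m - 1 : ℕ) : ℤ)) = y)) :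
    ¬ Meets w (oneHole m x y) := by
  rintro ⟨i, hi⟩
  refine h i ⟨?_, ?_⟩
  · have := hi ⟨0, by omega⟩ x (by simp [oneHole])
    simpa using this
  · have := hi ⟨m - 1, by omega⟩ y ?_
    · simpa using this
    · show oneHole m x y ⟨m - 1, by omega⟩ = some y
      unfold oneHole
      rw [if_neg (by simp; omega), if_pos (by simp)]

lemma no_two (m p : ℕ) (hp0 : 0 < p) (hpm : p < m - 1) (w : ℤ → ABC)
    (hper : ∀ i : ℤ, w (i + (p : ℕ)) = w i) :
    ¬ Meets w (twoDef m a c c p) := by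
  rintro ⟨i, hi⟩
  have h0 : w i = a := by
    have := hi ⟨0, by omega⟩ a (by simp [twoDef])
    simpa using this
  have h1 : w (i + (p : ℕ)) = c := by
    have := hi ⟨p, by omega⟩ c ?_
    · simpa using this
    · show twoDef m a c c p ⟨p, by omega⟩ = some c
      unfold twoDef
      rw [if_neg (by simp; omega), if_pos (by simp)]
  rw [hper i, h0] at h1
  exact absurd h1 (by simp)

/-- If (x₁+1) does not divide (x₂+1), then
{a⋄^(m-2)a, b⋄^(m-2)b, c⋄^(m-2)c, a⋄^(m-2)b, b⋄^(m-2)c, a⋄^(x₁)c⋄^(x₂)c} is avoidable. -/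
theorem stmt_5 (m x₁ x₂ : ℕ) (hm : 4 ≤ m) (hx₁ : 1 ≤ x₁) (hx₂ : 1 ≤ x₂)
    (hsum : x₁ + x₂ = m - 3) (hndvd : ¬ (x₁ + 1) ∣ (x₂ + 1)) :
    Avoidable ({oneHole m a a, oneHole m b b, oneHole m c c, oneHole m a b,
                oneHole m b c, twoDef m a c c (x₁ + 1)} : Set (PW m ABC)) := by
  have hn : m - 1 = (x₁ + 1) + (x₂ + 1) := by omega
  obtain ⟨w, hper, hstep⟩ := main_aux (x₁ + 1) (x₂ + 1) (m - 1) (by omega) (by omega) hn hndvd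
  refine ⟨w, ?_⟩
  intro u hu
  simp only [Set.mem_insert_iff, Set.mem_singleton_iff] at hu
  rcases hu with rfl | rfl | rfl | rfl | rfl | rfl
  · refine no_one m (by omega) w a a (fun i hi => ?_)
    obtain ⟨h1, h2⟩ := hi
    have h3 := hstep i
    rw [h1, h2] at h3
    simp [Allowed] at h3
  · refine no_one m (by omega) w b b (fun i hi => ?_)
    obtain ⟨h1, h2⟩ := hi
    have h3 := hstep i
    rw [h1, h2] at h3
    simp [Allowed] at h3
  · refine no_one m (by omega) w c c (fun i hi => ?_)
    obtain ⟨h1, h2⟩ := hi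
    have h3 := hstep i
    rw [h1, h2] at h3
    simp [Allowed] at h3
  · refine no_one m (by omega) w a b (fun i hi => ?_)
    obtain ⟨h1, h2⟩ := hi
    have h3 := hstep i
    rw [h1, h2] at h3
    simp [Allowed] at h3
  · refine no_one m (by omega) w b c (fun i hi => ?_)
    obtain ⟨h1, h2⟩ := hi
    have h3 := hstep i
    rw [h1, h2] at h3
    simp [Allowed] at h3
  · exact no_two m (x₁ + 1) (by omega) (by omega) w hper
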